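/- Every V-polyhedron A ⊆ ℝᵈ is an H-polyhedron. Furthermore, if A ≠ ℝᵈ, A has nonempty interior, and the origin lies in the interior of A, then A can be written in the form A = {x ∈ ℝᵈ : Yx ≤ 𝟏} for some real matrix Y. -/

import Mathlib

open RealInnerProductSpace Pointwise

/-- The cone (set of nonnegative linear combinations) generated by the vectors
`v 0, …, v (q-1)`. -/
def coneOf {d q : ℕ} (v : Fin q → EuclideanSpace ℝ (Fin d)) :
    Set (EuclideanSpace ℝ (Fin d)) :=
  {x | ∃ μ : Fin q → ℝ, (∀ j, 0 ≤ μ j) ∧ x = ∑ j, μ j • v j}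

/-- A `V`-polyhedron: `conv(Y) + cone(V)` for finite sets `Y` of points and
`V` of vectors. -/
def IsVPolyhedron {d : ℕ} (A : Set (EuclideanSpace ℝ (Fin d))) : Prop :=
  ∃ (p q : ℕ) (y : Fin p → EuclideanSpace ℝ (Fin d))
    (v : Fin q → EuclideanSpace ℝ (Fin d)),
    A = convexHull ℝ (Set.range y) + coneOf v

/-- An `H`-polyhedron: a finite intersection of closed half-spaces
`{x | ⟪a, x⟫ ≤ b}` (the empty intersection, i.e. `ℝᵈ`, is allowed). -/
def IsHPolyhedron {d : ℕ} (A : Set (EuclideanSpace ℝ (Fin d))) : Prop :=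
  ∃ (p : ℕ) (a : Fin p → EuclideanSpace ℝ (Fin d)) (b : Fin p → ℝ),
    A = ⋂ i, {x : EuclideanSpace ℝ (Fin d) | ⟪a i, x⟫ ≤ b i}

/-!
Projecting out one coordinate preserves H-polyhedra (Fourier–Motzkin elimination): `(x, t)`
satisfies a system for some `t` iff `x` satisfies the inequalities not involving `t`, together with
the positive combinations of each pair in which `t` has opposite signs. Iterating, linear images of
H-polyhedra between finite-dimensional spaces are H-polyhedra, and `conv(Y) + cone(V)` is the image
of the H-polyhedron `stdSimplex × ℝ≥0^q` under `(λ, μ) ↦ ∑ λᵢ yᵢ + ∑ μⱼ vⱼ`.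

If `0` is an interior point, every right-hand side `b` is nonnegative, and `b = 0` forces the
functional to vanish; dividing the remaining inequalities by `b` gives the form `Yx ≤ 𝟏`.
-/

open Set Topology

lemma exists_mem_upperBounds_inter_lowerBounds {α : Type*} [ConditionallyCompleteLattice α]
    [Nonempty α] {s t : Set α} (hs : s.Finite) (ht : t.Finite)
    (h : ∀ a ∈ s, ∀ b ∈ t, a ≤ b) : (upperBounds s ∩ lowerBounds t).Nonempty := by
  rcases s.eq_empty_or_nonempty with rfl | hne
  · obtain ⟨c, hc⟩ := ht.bddBelow
    exact ⟨c, by simp, hc⟩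
  · exact ⟨sSup s, fun a ha => le_csSup hs.bddAbove ha,
      fun b hb => csSup_le hne fun a ha => h a ha b hb⟩

lemma exists_forall_add_mul_le_iff {ι : Type*} {T : Set ι} (hT : T.Finite) (u c b : ι → ℝ) :
    (∃ t, ∀ i ∈ T, u i + t * c i ≤ b i) ↔
      (∀ i ∈ T, c i = 0 → u i ≤ b i) ∧
      ∀ i ∈ T, 0 < c i → ∀ j ∈ T, c j < 0 → c i * u j - c j * u i ≤ c i * b j - c j * b i := by
  constructor
  · rintro ⟨t, ht⟩
    refine ⟨fun i hi hci => by simpa [hci] using ht i hi, fun i hi hci j hj hcj => ?_⟩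
    nlinarith [mul_le_mul_of_nonneg_left (ht j hj) hci.le,
      mul_le_mul_of_nonneg_left (ht i hi) (neg_nonneg.2 hcj.le)]
  · rintro ⟨hzero, hpair⟩
    set r : ι → ℝ := fun i => (b i - u i) / c i
    obtain ⟨t, hlow, hup⟩ := exists_mem_upperBounds_inter_lowerBounds
      ((hT.sep fun j => c j < 0).image r) ((hT.sep fun i => 0 < c i).image r) (by
        rintro _ ⟨j, ⟨hj, hcj⟩, rfl⟩ _ ⟨i, ⟨hi, hci⟩, rfl⟩
        rw [div_le_iff_of_neg hcj, div_mul_eq_mul_div, div_le_iff₀ hci]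
        linarith [hpair i hi hci j hj hcj])
    refine ⟨t, fun i hi => ?_⟩
    rcases lt_trichotomy (c i) 0 with hci | hci | hci
    · have := hlow (mem_image_of_mem r ⟨hi, hci⟩)
      rw [div_le_iff_of_neg hci] at this
      linarith
    · simpa [hci] using hzero i hi hci
    · have := hup (mem_image_of_mem r ⟨hi, hci⟩)
      rw [le_div_iff₀ hci] at this
      linarith

def IsPolyhedral {E : Type*} [AddCommGroup E] [Module ℝ E] (S : Set E) : Prop :=
  ∃ T : Set (Module.Dual ℝ E × ℝ), T.Finite ∧ S = {x | ∀ p ∈ T, p.1 x ≤ p.2}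

section

variable {E F : Type*} [AddCommGroup E] [Module ℝ E] [AddCommGroup F] [Module ℝ F]

lemma isPolyhedral_setOf_le (f : Module.Dual ℝ E) (b : ℝ) : IsPolyhedral {x | f x ≤ b} :=
  ⟨{(f, b)}, finite_singleton _, by simp⟩

namespace IsPolyhedral

lemma inter {S S' : Set E} (hS : IsPolyhedral S) (hS' : IsPolyhedral S') :
    IsPolyhedral (S ∩ S') := by
  obtain ⟨T, hT, rfl⟩ := hS
  obtain ⟨T', hT', rfl⟩ := hS'
  refine ⟨T ∪ T', hT.union hT', ?_⟩
  ext x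
  simp only [mem_inter_iff, mem_ofPred_eq, mem_union, or_imp, forall_and]

lemma iInter {ι : Type*} [Finite ι] {S : ι → Set E} (hS : ∀ i, IsPolyhedral (S i)) :
    IsPolyhedral (⋂ i, S i) := by
  choose T hT hST using hS
  refine ⟨⋃ i, T i, finite_iUnion hT, ?_⟩
  ext x
  simp only [mem_iInter, hST, mem_ofPred_eq, mem_iUnion, forall_exists_index]
  exact forall_comm

lemma preimage (g : E →ₗ[ℝ] F) {S : Set F} (hS : IsPolyhedral S) :
    IsPolyhedral (g ⁻¹' S) := by
  obtain ⟨T, hT, rfl⟩ := hS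
  refine ⟨(fun p => (p.1 ∘ₗ g, p.2)) '' T, hT.image _, ?_⟩
  ext x
  simp only [mem_preimage, mem_ofPred_eq, forall_mem_image, LinearMap.comp_apply]

lemma prod {S : Set E} {S' : Set F} (hS : IsPolyhedral S) (hS' : IsPolyhedral S') :
    IsPolyhedral (S ×ˢ S') := by
  rw [prod_eq]
  exact (hS.preimage (LinearMap.fst ℝ E F)).inter (hS'.preimage (LinearMap.snd ℝ E F))

lemma image_fst {S : Set (E × ℝ)} (hS : IsPolyhedral S) : IsPolyhedral (Prod.fst '' S) := by
  obtain ⟨T, hT, rfl⟩ := hS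
  let c : Module.Dual ℝ (E × ℝ) × ℝ → ℝ := fun p => p.1 (0, 1)
  let g : Module.Dual ℝ (E × ℝ) × ℝ → Module.Dual ℝ E := fun p => p.1 ∘ₗ LinearMap.inl ℝ E ℝ
  have hsplit (p : Module.Dual ℝ (E × ℝ) × ℝ) (x : E) (t : ℝ) : p.1 (x, t) = g p x + t * c p :=
    calc p.1 (x, t) = p.1 ((x, 0) + t • (0, 1)) := by simp
      _ = g p x + t * c p := by rw [map_add, map_smul]; rfl
  refine ⟨(fun p => (g p, p.2)) '' {p ∈ T | c p = 0} ∪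
      (fun pq => (c pq.1 • g pq.2 - c pq.2 • g pq.1, c pq.1 * pq.2.2 - c pq.2 * pq.1.2)) ''
        ({p ∈ T | 0 < c p} ×ˢ {q ∈ T | c q < 0}),
    ((hT.sep _).image _).union (((hT.sep _).prod (hT.sep _)).image _), ?_⟩
  ext x
  simp only [mem_image, mem_ofPred_eq, Prod.exists, exists_and_right, exists_eq_right, hsplit]
  simp only [mem_union, or_imp, forall_and, forall_mem_image, forall_prod_set, mem_sep_iff,
    and_imp, LinearMap.sub_apply, LinearMap.smul_apply, smul_eq_mul]
  exact exists_forall_add_mul_le_iff hT (fun p => g p x) c Prod.snd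

lemma image_fst_pi {n : ℕ} {S : Set (E × (Fin n → ℝ))} (hS : IsPolyhedral S) :
    IsPolyhedral (Prod.fst '' S) := by
  induction n with
  | zero =>
    convert hS.preimage (LinearMap.inl ℝ E (Fin 0 → ℝ)) using 1
    ext x
    constructor
    · rintro ⟨⟨x, w⟩, hw, rfl⟩
      rwa [Subsingleton.elim w 0] at hw
    · exact fun hx => ⟨_, hx, rfl⟩
  | succ n ih =>
    let ψ : (E × (Fin n → ℝ)) × ℝ →ₗ[ℝ] E × (Fin (n + 1) → ℝ) :=
      (LinearMap.fst ℝ E _ ∘ₗ LinearMap.fst ℝ _ ℝ).prod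
        ((Fin.consLinearEquiv ℝ fun _ => ℝ).toLinearMap ∘ₗ
          (LinearMap.snd ℝ _ ℝ).prod (LinearMap.snd ℝ E _ ∘ₗ LinearMap.fst ℝ _ ℝ))
    have hψ (x : E) (v : Fin n → ℝ) (t : ℝ) : ψ ((x, v), t) = (x, Fin.cons t v) := rfl
    convert ih (hS.preimage ψ).image_fst using 1
    ext x
    constructor
    · rintro ⟨⟨x, w⟩, hw, rfl⟩
      refine ⟨(x, Fin.tail w), ⟨((x, Fin.tail w), w 0), ?_, rfl⟩, rfl⟩
      simpa [hψ, Fin.cons_self_tail] using hw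
    · rintro ⟨_, ⟨⟨⟨x, v⟩, t⟩, hS, rfl⟩, rfl⟩
      exact ⟨_, hS, rfl⟩

end IsPolyhedral

lemma isPolyhedral_setOf_eq (f : Module.Dual ℝ E) (b : ℝ) : IsPolyhedral {x | f x = b} := by
  convert (isPolyhedral_setOf_le f b).inter (isPolyhedral_setOf_le (-f) (-b)) using 1
  ext x
  simp [le_antisymm_iff]

lemma isPolyhedral_zero [FiniteDimensional ℝ E] : IsPolyhedral ({0} : Set E) := by
  let b := Module.finBasis ℝ E
  convert IsPolyhedral.iInter fun i => isPolyhedral_setOf_eq (b.coord i) 0 using 1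
  ext x
  simp only [mem_singleton_iff, mem_iInter, mem_ofPred_eq, b.forall_coord_eq_zero_iff]

lemma isPolyhedral_setOf_forall_nonneg (ι : Type*) [Fintype ι] :
    IsPolyhedral {x : ι → ℝ | ∀ i, 0 ≤ x i} := by
  rw [ofPred_forall]
  refine IsPolyhedral.iInter fun i => ?_
  simpa using isPolyhedral_setOf_le (E := ι → ℝ) (-LinearMap.proj i) 0

lemma isPolyhedral_stdSimplex (ι : Type*) [Fintype ι] : IsPolyhedral (stdSimplex ℝ ι) := by
  convert (isPolyhedral_setOf_forall_nonneg ι).inter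
    (isPolyhedral_setOf_eq (∑ i, LinearMap.proj i : Module.Dual ℝ (ι → ℝ)) 1) using 1
  ext x
  simp [stdSimplex]

lemma IsPolyhedral.image [FiniteDimensional ℝ E] [FiniteDimensional ℝ F] (g : E →ₗ[ℝ] F)
    {S : Set E} (hS : IsPolyhedral S) : IsPolyhedral (g '' S) := by
  -- project the graph of `g` over `S`, written in coordinates `w = e x`, onto `F`
  let e := (Module.finBasis ℝ E).equivFun
  let φ : F × (Fin (Module.finrank ℝ E) → ℝ) →ₗ[ℝ] E := e.symm.toLinearMap ∘ₗ LinearMap.snd ℝ F _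
  convert ((hS.preimage φ).inter
    ((isPolyhedral_zero (E := F)).preimage (LinearMap.fst ℝ F _ - g ∘ₗ φ))).image_fst_pi using 1
  ext y
  constructor
  · rintro ⟨x, hx, rfl⟩
    exact ⟨(g x, e x), ⟨by simpa [φ] using hx, by simp [φ]⟩, rfl⟩
  · rintro ⟨⟨y, w⟩, ⟨hw, hy⟩, rfl⟩
    have hy' : y = g (e.symm w) := by simpa [φ, sub_eq_zero] using hy
    exact ⟨e.symm w, hw, hy'.symm⟩

lemma LinearMap.eq_zero_of_setOf_nonpos_mem_nhds [TopologicalSpace E] [ContinuousSMul ℝ E]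
    {f : Module.Dual ℝ E} (hf : {x | f x ≤ 0} ∈ 𝓝 0) : f = 0 := by
  have hnonpos (x : E) : f x ≤ 0 := by
    have hlim : Filter.Tendsto (fun t : ℝ => t • x) (𝓝[>] 0) (𝓝 0) := by
      have hcont : Continuous fun t : ℝ => t • x := continuous_id.smul continuous_const
      simpa using (hcont.tendsto 0).mono_left nhdsWithin_le_nhds
    obtain ⟨t, ht, htpos⟩ := ((hlim.eventually hf).and self_mem_nhdsWithin).exists
    simp only [map_smul, smul_eq_mul] at ht
    exact nonpos_of_mul_nonpos_right ht htpos
  ext x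
  exact le_antisymm (hnonpos x) (by simpa using hnonpos (-x))

lemma IsPolyhedral.exists_eq_setOf_le_one [TopologicalSpace E] [ContinuousSMul ℝ E] {S : Set E}
    (hS : IsPolyhedral S) (h0 : S ∈ 𝓝 0) :
    ∃ T : Set (Module.Dual ℝ E), T.Finite ∧ S = {x | ∀ f ∈ T, f x ≤ 1} := by
  obtain ⟨T, hT, rfl⟩ := hS
  refine ⟨(fun p => p.2⁻¹ • p.1) '' T, hT.image _, ?_⟩
  ext x
  simp only [mem_ofPred_eq, forall_mem_image]
  refine forall₂_congr fun p hp => ?_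
  have hb : 0 ≤ p.2 := by simpa using mem_of_mem_nhds h0 p hp
  rcases hb.eq_or_lt with hb | hb
  · have : p.1 = 0 := LinearMap.eq_zero_of_setOf_nonpos_mem_nhds
      (Filter.mem_of_superset h0 fun y hy => hb ▸ hy p hp)
    simp [this, ← hb]
  · rw [LinearMap.smul_apply, smul_eq_mul, inv_mul_le_iff₀ hb, mul_one]

end

lemma IsVPolyhedron.isPolyhedral {d : ℕ} {A : Set (EuclideanSpace ℝ (Fin d))}
    (hA : IsVPolyhedron A) : IsPolyhedral A := by
  obtain ⟨p, q, y, v, rfl⟩ := hA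
  have hconv : convexHull ℝ (range y) =
      Fintype.linearCombination ℝ y '' stdSimplex ℝ (Fin p) := by
    rw [← convexHull_rangle_single_eq_stdSimplex, LinearMap.image_convexHull, ← range_comp]
    congr 2
    ext i
    simp [Fintype.linearCombination_apply_single]
  have hcone : coneOf v = Fintype.linearCombination ℝ v '' {μ | ∀ j, 0 ≤ μ j} := by
    ext x
    simp [coneOf, Fintype.linearCombination_apply, eq_comm]
  have hsum : convexHull ℝ (range y) + coneOf v =
      (Fintype.linearCombination ℝ y).coprod (Fintype.linearCombination ℝ v) ''
        (stdSimplex ℝ (Fin p) ×ˢ {μ | ∀ j, 0 ≤ μ j}) := by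
    rw [hconv, hcone, ← add_image_prod, prod_image_image_eq, image_image]
    rfl
  rw [hsum]
  exact ((isPolyhedral_stdSimplex _).prod (isPolyhedral_setOf_forall_nonneg _)).image _

lemma IsPolyhedral.isHPolyhedron {d : ℕ} {A : Set (EuclideanSpace ℝ (Fin d))}
    (hA : IsPolyhedral A) : IsHPolyhedron A := by
  obtain ⟨T, hT, rfl⟩ := hA
  obtain ⟨n, f, hf⟩ := hT.fin_embedding
  refine ⟨n, fun i => (InnerProductSpace.toDual ℝ _).symm (f i).1.toContinuousLinearMap,
    fun i => (f i).2, ?_⟩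
  ext x
  simp [← hf]

/-- Every `V`-polyhedron is an `H`-polyhedron; moreover, if `A ≠ ℝᵈ`, `A` has
nonempty interior and the origin lies in the interior of `A`, then `A` is of the
form `P(Y, 𝟏) = {x | ⟪yᵢ, x⟫ ≤ 1 for all i}`. -/
theorem vPolyhedron_is_hPolyhedron (d : ℕ) (A : Set (EuclideanSpace ℝ (Fin d)))
    (hA : IsVPolyhedron A) :
    IsHPolyhedron A ∧
    (A ≠ Set.univ → (interior A).Nonempty →
      (0 : EuclideanSpace ℝ (Fin d)) ∈ interior A →
      ∃ (p : ℕ) (y : Fin p → EuclideanSpace ℝ (Fin d)),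
        A = {x : EuclideanSpace ℝ (Fin d) | ∀ i, ⟪y i, x⟫ ≤ 1}) := by
  have hA' := hA.isPolyhedral
  refine ⟨hA'.isHPolyhedron, fun _ _ h0 => ?_⟩
  obtain ⟨T, hT, rfl⟩ := hA'.exists_eq_setOf_le_one (mem_interior_iff_mem_nhds.mp h0)
  obtain ⟨p, f, hf⟩ := hT.fin_embedding
  refine ⟨p, fun i => (InnerProductSpace.toDual ℝ _).symm (f i).toContinuousLinearMap, ?_⟩
  ext x
  simp [← hf]
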